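/- arXiv:1706.00798 — 8 statements merged into one kernel-verified Lean document; each statement's English description precedes it below -/
import Mathlib

section
/- Let G be a finite simple graph and (b_1,…,b_k) a sequence of distinct vertices of G. Then there exist vertices a_1,…,a_k of G such that for every i = 1,…,k the force a_i→b_i is valid under CCR-Z_ℓ̇ with respect to the blue set V(G) ∖ {b_i, b_{i+1},…,b_k} if and only if (b_k, b_{k−1},…,b_1) is a dominating sequence of G. -/
namespace ZFGrundy

variable {V : Type*}

/-- `u` is a member of the closed neighborhood `N[x]` of `x` in `G`. -/
def ClosedNbr (G : SimpleGraph V) (x u : V) : Prop := u = x ∨ G.Adj x u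

/-- CCR-Z: the force `x → y` is valid w.r.t. blue set `S` if `y ∉ S`, `y ∈ N(x)`,
and `N[x] \ {y} ⊆ S`. -/
def ZForce (G : SimpleGraph V) (S : Set V) (x y : V) : Prop :=
  y ∉ S ∧ G.Adj x y ∧ ∀ u, ClosedNbr G x u → u ≠ y → u ∈ S

/-- CCR-Z_ℓ̇: the force `x → y` is valid w.r.t. blue set `S` if `y ∉ S`, `y ∈ N[x]`,
and `N[x] \ {y} ⊆ S`. -/
def ZelldForce (G : SimpleGraph V) (S : Set V) (x y : V) : Prop :=
  y ∉ S ∧ ClosedNbr G x y ∧ ∀ u, ClosedNbr G x u → u ≠ y → u ∈ S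

/-- CCR-Z_−: the force `x → y` is valid w.r.t. blue set `S` if `y ∉ S`, `y ∈ N(x)`,
and `N(x) \ {y} ⊆ S`. -/
def ZminusForce (G : SimpleGraph V) (S : Set V) (x y : V) : Prop :=
  y ∉ S ∧ G.Adj x y ∧ ∀ u, G.Adj x u → u ≠ y → u ∈ S

/-- CCR-Z_L: either `x ≠ y` and the force is valid under CCR-Z_−, or `x = y` and the
force is valid under CCR-Z_ℓ̇. -/
def ZLForce (G : SimpleGraph V) (S : Set V) (x y : V) : Prop :=
  (x ≠ y ∧ ZminusForce G S x y) ∨ (x = y ∧ ZelldForce G S x y)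

/-- `B` is a zero forcing set of `G` with respect to the color change rule `force`:
there is an ordering `b 0, …, b (k-1)` of the vertices outside `B` and vertices
`a 0, …, a (k-1)` such that each force `a i → b i` is valid w.r.t. the blue set
consisting of all vertices other than `b i, b (i+1), …, b (k-1)`. -/
def IsZFS (G : SimpleGraph V) (force : SimpleGraph V → Set V → V → V → Prop)
    (B : Finset V) : Prop :=
  ∃ (k : ℕ) (b a : Fin k → V), Function.Injective b ∧
    (∀ v : V, v ∉ B ↔ ∃ i, b i = v) ∧
    ∀ i : Fin k, force G {v | ∀ j : Fin k, i ≤ j → v ≠ b j} (a i) (b i)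

/-- The zero forcing number with respect to the color change rule `force`. -/
noncomputable def zfNum (G : SimpleGraph V)
    (force : SimpleGraph V → Set V → V → V → Prop) : ℕ :=
  sInf {m : ℕ | ∃ B : Finset V, IsZFS G force B ∧ B.card = m}

/-- A Z-sequence: distinct vertices with `N(v i) \ ⋃_{j<i} N[v j] ≠ ∅`. -/
def IsZSeq (G : SimpleGraph V) {k : ℕ} (v : Fin k → V) : Prop :=
  Function.Injective v ∧
  ∀ i, ∃ u, G.Adj (v i) u ∧ ∀ j, j < i → ¬ ClosedNbr G (v j) u

/-- A dominating sequence: distinct vertices with `N[v i] \ ⋃_{j<i} N[v j] ≠ ∅`. -/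
def IsDomSeq (G : SimpleGraph V) {k : ℕ} (v : Fin k → V) : Prop :=
  Function.Injective v ∧
  ∀ i, ∃ u, ClosedNbr G (v i) u ∧ ∀ j, j < i → ¬ ClosedNbr G (v j) u

/-- A total dominating sequence: distinct vertices with `N(v i) \ ⋃_{j<i} N(v j) ≠ ∅`. -/
def IsTotDomSeq (G : SimpleGraph V) {k : ℕ} (v : Fin k → V) : Prop :=
  Function.Injective v ∧
  ∀ i, ∃ u, G.Adj (v i) u ∧ ∀ j, j < i → ¬ G.Adj (v j) u

/-- An L-sequence: distinct vertices with `N[v i] \ ⋃_{j<i} N(v j) ≠ ∅`. -/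
def IsLSeq (G : SimpleGraph V) {k : ℕ} (v : Fin k → V) : Prop :=
  Function.Injective v ∧
  ∀ i, ∃ u, ClosedNbr G (v i) u ∧ ∀ j, j < i → ¬ G.Adj (v j) u

/-- The Z-Grundy domination number: the largest length of a Z-sequence. -/
noncomputable def grundyZ (G : SimpleGraph V) : ℕ :=
  sSup {k : ℕ | ∃ v : Fin k → V, IsZSeq G v}

/-- The Grundy domination number: the largest length of a dominating sequence. -/
noncomputable def grundyDom (G : SimpleGraph V) : ℕ :=
  sSup {k : ℕ | ∃ v : Fin k → V, IsDomSeq G v}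

/-- The Grundy total domination number: the largest length of a total dominating
sequence. -/
noncomputable def grundyTot (G : SimpleGraph V) : ℕ :=
  sSup {k : ℕ | ∃ v : Fin k → V, IsTotDomSeq G v}

/-- The L-Grundy domination number: the largest length of an L-sequence. -/
noncomputable def grundyL (G : SimpleGraph V) : ℕ :=
  sSup {k : ℕ | ∃ v : Fin k → V, IsLSeq G v}

/-- The largest length of a total dominating sequence using only vertices of `X`. -/
noncomputable def grundyTotOn (G : SimpleGraph V) (X : Set V) : ℕ :=
  sSup {k : ℕ | ∃ v : Fin k → V, IsTotDomSeq G v ∧ ∀ i, v i ∈ X}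

/-- The domination number: minimum size of a set `X` such that every vertex outside
`X` has a neighbor in `X`. -/
noncomputable def domNum (G : SimpleGraph V) : ℕ :=
  sInf {m : ℕ | ∃ X : Finset V, (∀ v, v ∉ X → ∃ u ∈ X, G.Adj v u) ∧ X.card = m}

/-- The vertex cover number: minimum size of a set of vertices meeting every edge. -/
noncomputable def vcNum (G : SimpleGraph V) : ℕ :=
  sInf {m : ℕ | ∃ C : Finset V, (∀ u w, G.Adj u w → u ∈ C ∨ w ∈ C) ∧ C.card = m}

/-- The family `S(G)` of real symmetric matrices whose off-diagonal entry `A i j`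
is nonzero exactly when `i` and `j` are adjacent in `G`. -/
def SFam (G : SimpleGraph V) : Set (Matrix V V ℝ) :=
  {A | A.IsSymm ∧ ∀ i j : V, i ≠ j → (A i j ≠ 0 ↔ G.Adj i j)}

/-- The family `S_ℓ̇(G)`: matrices in `S(G)` with all diagonal entries nonzero. -/
def SldFam (G : SimpleGraph V) : Set (Matrix V V ℝ) :=
  {A | A ∈ SFam G ∧ ∀ i : V, A i i ≠ 0}

/-- The family `S_0(G)`: matrices in `S(G)` with all diagonal entries zero. -/
def S0Fam (G : SimpleGraph V) : Set (Matrix V V ℝ) :=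
  {A | A ∈ SFam G ∧ ∀ i : V, A i i = 0}

/-- The bipartite graph `B_L(G)` on `{x_i} ∪ {y_i} ∪ {z_i}` (encoded as
`Sum.inl i`, `Sum.inr (Sum.inl i)`, `Sum.inr (Sum.inr i)`), with edges `{x i, y j}`
and `{x i, z j}` for every edge `{i, j}` of `G`, together with edges `{x i, y i}`
for every vertex `i`. -/
def BL (G : SimpleGraph V) : SimpleGraph (V ⊕ V ⊕ V) :=
  SimpleGraph.fromRel fun p q =>
    match p, q with
    | Sum.inl i, Sum.inr (Sum.inl j) => G.Adj i j ∨ i = j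
    | Sum.inl i, Sum.inr (Sum.inr j) => G.Adj i j
    | _, _ => False

/-! A force `a → b i` is valid exactly when `b i ∈ N[a]` while no later `b j` lies in `N[a]`.
Since `N[·]` is symmetric, the existence of such an `a` says that `N[b i]` contains a vertex
outside `N[b j]` for all `j > i`, which is the defining condition of a dominating sequence read
backwards. -/

theorem closedNbr_comm {G : SimpleGraph V} {x u : V} : ClosedNbr G x u ↔ ClosedNbr G u x :=
  or_congr eq_comm (G.adj_comm x u)

theorem zelldForce_compl_tail_iff {G : SimpleGraph V} {k : ℕ} {b : Fin k → V}
    (hb : Function.Injective b) (i : Fin k) (x : V) :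
    ZelldForce G {v | ∀ j : Fin k, i ≤ j → v ≠ b j} x (b i) ↔
      ClosedNbr G x (b i) ∧ ∀ j, i < j → ¬ ClosedNbr G x (b j) := by
  constructor
  · rintro ⟨-, hxi, hblue⟩
    refine ⟨hxi, fun j hij hxj => ?_⟩
    exact hblue (b j) hxj (hb.ne hij.ne') j hij.le rfl
  · rintro ⟨hxi, hlater⟩
    refine ⟨fun h => h i le_rfl rfl, hxi, ?_⟩
    rintro u hxu hui j hij rfl
    have hij' : i < j := lt_of_le_of_ne hij fun h => hui (congrArg b h.symm)
    exact hlater j hij' hxu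

theorem isDomSeq_comp_rev_iff {G : SimpleGraph V} {k : ℕ} {b : Fin k → V}
    (hb : Function.Injective b) :
    IsDomSeq G (fun i : Fin k => b i.rev) ↔
      ∀ i, ∃ u, ClosedNbr G (b i) u ∧ ∀ j, i < j → ¬ ClosedNbr G (b j) u := by
  refine (and_iff_right (hb.comp Fin.rev_injective)).trans ?_
  refine Fin.revPerm.forall_congr fun i => exists_congr fun u => and_congr Iff.rfl ?_
  refine ⟨fun h j hij => ?_, fun h j hji => ?_⟩
  · simpa using h j.rev (by simpa using Fin.rev_lt_rev.mpr hij)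
  · simpa using h j.rev (by simpa using Fin.rev_lt_rev.mpr hji)

theorem statement_0_general {V : Type*} (G : SimpleGraph V) (k : ℕ)
    (b : Fin k → V) (hb : Function.Injective b) :
    (∃ a : Fin k → V, ∀ i : Fin k,
        ZelldForce G {v | ∀ j : Fin k, i ≤ j → v ≠ b j} (a i) (b i)) ↔
      IsDomSeq G (fun i : Fin k => b i.rev) := by
  simp only [zelldForce_compl_tail_iff hb, isDomSeq_comp_rev_iff hb,
    closedNbr_comm (G := G) (u := b _), Classical.skolem]

/-- For distinct vertices `b 0, …, b (k-1)` of `G`, there exist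
`a 0, …, a (k-1)` such that each force `a i → b i` is valid under CCR-Z_ℓ̇ w.r.t.
the blue set `V(G) \ {b i, …, b (k-1)}` iff the reversed sequence
`(b (k-1), …, b 0)` is a dominating sequence of `G`. -/
theorem statement_0 {V : Type*} [Fintype V] (G : SimpleGraph V) (k : ℕ)
    (b : Fin k → V) (hb : Function.Injective b) :
    (∃ a : Fin k → V, ∀ i : Fin k,
        ZelldForce G {v | ∀ j : Fin k, i ≤ j → v ≠ b j} (a i) (b i)) ↔
      IsDomSeq G (fun i : Fin k => b i.rev) :=
  statement_0_general G k b hb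

end ZFGrundy
end

section
/- Let G be a finite simple graph and (b_1,…,b_k) a sequence of distinct vertices of G. Then there exist vertices a_1,…,a_k of G such that for every i = 1,…,k the force a_i→b_i is valid under CCR-Z_− with respect to the blue set V(G) ∖ {b_i, b_{i+1},…,b_k} if and only if (b_k, b_{k−1},…,b_1) is a total dominating sequence of G. -/
namespace ZFGrundy

variable {V : Type*}

/-
A force `a → bᵢ` under CCR-Z₋ is valid exactly when `a` is a neighbour of `bᵢ` and of no later
`bⱼ`. Such an `a` is precisely a vertex in `N(bᵢ) ∖ ⋃_{j>i} N(bⱼ)`, the new vertex that `bᵢ`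
totally dominates in the reversed sequence.
-/

theorem zminusForce_iff {k : ℕ} {G : SimpleGraph V} {b : Fin k → V} (hb : Function.Injective b)
    (i : Fin k) (x : V) :
    ZminusForce G {v | ∀ j : Fin k, i ≤ j → v ≠ b j} x (b i) ↔
      G.Adj x (b i) ∧ ∀ j, i < j → ¬ G.Adj x (b j) := by
  constructor
  · rintro ⟨-, hadj, hblue⟩
    exact ⟨hadj, fun j hij hadj' => hblue (b j) hadj' (hb.ne hij.ne') j hij.le rfl⟩
  · rintro ⟨hadj, hnot⟩
    refine ⟨fun h => h i le_rfl rfl, hadj, fun u hu hne j hij hub => ?_⟩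
    subst hub
    exact hnot j (lt_of_le_of_ne hij fun h => hne (congrArg b h.symm)) hu

theorem isTotDomSeq_rev_iff {k : ℕ} {G : SimpleGraph V} {b : Fin k → V} :
    IsTotDomSeq G (fun i : Fin k => b i.rev) ↔
      Function.Injective b ∧ ∀ i, ∃ u, G.Adj (b i) u ∧ ∀ j, i < j → ¬ G.Adj (b j) u := by
  refine and_congr (Fin.revPerm.injective_comp b) (Fin.revPerm.forall_congr fun i => ?_)
  refine exists_congr fun u => and_congr Iff.rfl (Fin.revPerm.forall_congr fun j => ?_)
  simp [Fin.rev_lt_rev]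

theorem statement_1_general {V : Type*} (G : SimpleGraph V) (k : ℕ)
    (b : Fin k → V) (hb : Function.Injective b) :
    (∃ a : Fin k → V, ∀ i : Fin k,
        ZminusForce G {v | ∀ j : Fin k, i ≤ j → v ≠ b j} (a i) (b i)) ↔
      IsTotDomSeq G (fun i : Fin k => b i.rev) := by
  simp only [zminusForce_iff hb, isTotDomSeq_rev_iff, hb, true_and, Classical.skolem, G.adj_comm]

/-- For distinct vertices `b 0, …, b (k-1)` of `G`, there exist
`a 0, …, a (k-1)` such that each force `a i → b i` is valid under CCR-Z_− w.r.t.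
the blue set `V(G) \ {b i, …, b (k-1)}` iff the reversed sequence
`(b (k-1), …, b 0)` is a total dominating sequence of `G`. -/
theorem statement_1 {V : Type*} [Fintype V] (G : SimpleGraph V) (k : ℕ)
    (b : Fin k → V) (hb : Function.Injective b) :
    (∃ a : Fin k → V, ∀ i : Fin k,
        ZminusForce G {v | ∀ j : Fin k, i ≤ j → v ≠ b j} (a i) (b i)) ↔
      IsTotDomSeq G (fun i : Fin k => b i.rev) :=
  statement_1_general G k b hb

end ZFGrundy
end

section
/- For every finite simple graph G on n vertices, Z(G) = n − γ^Z_gr(G). -/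
namespace ZFGrundy

variable {V : Type*}

/-! The chronological list of forces `a i → b i` of a zero forcing process, read as a sequence
of forcers, is a Z-sequence witnessed by the forced vertices, because a forced vertex lies
outside the closed neighbourhoods of all earlier forcers; conversely the witnesses of a
Z-sequence can be forced in order starting from the complement of the witness set. Hence
zero forcing sets of size `m` and Z-sequences of length `n - m` correspond. -/

/-- The forces `a i → b i`, in chronological order, of a zero forcing process. -/
def ZChain {k : ℕ} (G : SimpleGraph V) (a b : Fin k → V) : Prop :=
  (∀ i, G.Adj (a i) (b i)) ∧ ∀ i j, j < i → ¬ ClosedNbr G (a j) (b i)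

section ZChain

variable {G : SimpleGraph V} {k : ℕ}

theorem ZChain.injective_left {a b : Fin k → V} (h : ZChain G a b) : Function.Injective a := by
  intro i j hij
  by_contra hne
  rcases lt_or_gt_of_ne hne with hlt | hlt
  · exact h.2 j i hlt (Or.inr (hij ▸ h.1 j))
  · exact h.2 i j hlt (Or.inr (hij ▸ h.1 i))

theorem ZChain.injective_right {a b : Fin k → V} (h : ZChain G a b) :
    Function.Injective b := by
  intro i j hij
  by_contra hne
  rcases lt_or_gt_of_ne hne with hlt | hlt
  · exact h.2 j i hlt (Or.inr (hij ▸ h.1 i))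
  · exact h.2 i j hlt (Or.inr (hij ▸ h.1 j))

theorem isZSeq_iff_exists_zChain {v : Fin k → V} : IsZSeq G v ↔ ∃ u, ZChain G v u := by
  constructor
  · rintro ⟨-, hwit⟩
    choose u hadj hfresh using hwit
    exact ⟨u, hadj, hfresh⟩
  · rintro ⟨u, h⟩
    exact ⟨h.injective_left, fun i => ⟨u i, h.1 i, fun j hj => h.2 i j hj⟩⟩

theorem isZFS_zForce_iff {B : Finset V} :
    IsZFS G ZForce B ↔
      ∃ (k : ℕ) (a b : Fin k → V), ZChain G a b ∧ ∀ v, v ∉ B ↔ ∃ i, b i = v := by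
  constructor
  · rintro ⟨k, b, a, hinj, hrange, hforce⟩
    refine ⟨k, a, b, ⟨fun i => (hforce i).2.1, fun i j hji hcn => ?_⟩, hrange⟩
    exact (hforce j).2.2 (b i) hcn (hinj.ne hji.ne') i hji.le rfl
  · rintro ⟨k, a, b, h, hrange⟩
    refine ⟨k, b, a, h.injective_right, hrange, fun i => ⟨fun hb => hb i le_rfl rfl, h.1 i, ?_⟩⟩
    intro w hw hne j hij hwj
    rcases hij.lt_or_eq with hlt | rfl
    · exact h.2 j i hlt (hwj ▸ hw)
    · exact hne hwj

end ZChain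

theorem card_add_eq_card_of_compl_eq_range [Fintype V] {B : Finset V} {k : ℕ} {b : Fin k → V}
    (hb : Function.Injective b) (hrange : ∀ v, v ∉ B ↔ ∃ i, b i = v) :
    B.card + k = Fintype.card V := by
  classical
  have hcompl : Bᶜ = Finset.univ.image b := by
    ext v
    simpa using hrange v
  rw [← Finset.card_add_card_compl B, hcompl, Finset.card_image_of_injective _ hb,
    Finset.card_univ, Fintype.card_fin]

section Extremal

variable [Fintype V] (G : SimpleGraph V)

theorem exists_isZSeq_of_isZFS {B : Finset V} (hB : IsZFS G ZForce B) :
    ∃ (k : ℕ) (v : Fin k → V), IsZSeq G v ∧ B.card + k = Fintype.card V := by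
  obtain ⟨k, a, b, h, hrange⟩ := isZFS_zForce_iff.1 hB
  exact ⟨k, a, isZSeq_iff_exists_zChain.2 ⟨b, h⟩,
    card_add_eq_card_of_compl_eq_range h.injective_right hrange⟩

theorem exists_isZFS_of_isZSeq {k : ℕ} {v : Fin k → V} (hv : IsZSeq G v) :
    ∃ B : Finset V, IsZFS G ZForce B ∧ B.card + k = Fintype.card V := by
  classical
  obtain ⟨u, h⟩ := isZSeq_iff_exists_zChain.1 hv
  have hrange : ∀ w, w ∉ (Finset.univ.image u)ᶜ ↔ ∃ i, u i = w := by simp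
  exact ⟨_, isZFS_zForce_iff.2 ⟨k, v, u, h, hrange⟩,
    card_add_eq_card_of_compl_eq_range h.injective_right hrange⟩

theorem bddAbove_zSeq_lengths : BddAbove {k : ℕ | ∃ v : Fin k → V, IsZSeq G v} :=
  ⟨Fintype.card V, fun k ⟨v, hv⟩ => by simpa using Fintype.card_le_of_injective v hv.1⟩

theorem exists_isZSeq_length_grundyZ : ∃ v : Fin (grundyZ G) → V, IsZSeq G v := by
  refine Nat.sSup_mem ?_ (bddAbove_zSeq_lengths G)
  exact ⟨0, Fin.elim0, fun i => i.elim0, fun i => i.elim0⟩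

theorem exists_isZFS_card_zfNum :
    ∃ B : Finset V, IsZFS G ZForce B ∧ B.card = zfNum G ZForce := by
  refine Nat.sInf_mem (s := {m | ∃ B : Finset V, IsZFS G ZForce B ∧ B.card = m}) ?_
  exact ⟨_, Finset.univ, ⟨0, Fin.elim0, Fin.elim0, fun i => i.elim0, by simp, fun i => i.elim0⟩, rfl⟩

end Extremal

/-- `Z(G) = n - γ^Z_gr(G)` for every finite simple graph `G`
on `n` vertices. -/
theorem statement_3 {V : Type*} [Fintype V] (G : SimpleGraph V) :
    zfNum G ZForce = Fintype.card V - grundyZ G := by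
  obtain ⟨B, hB, hBcard⟩ := exists_isZFS_card_zfNum G
  obtain ⟨k, v, hv, hBk⟩ := exists_isZSeq_of_isZFS G hB
  have hk : k ≤ grundyZ G := le_csSup (bddAbove_zSeq_lengths G) ⟨v, hv⟩
  obtain ⟨w, hw⟩ := exists_isZSeq_length_grundyZ G
  obtain ⟨B', hB', hB'k⟩ := exists_isZFS_of_isZSeq G hw
  have hle : zfNum G ZForce ≤ B'.card := Nat.sInf_le ⟨B', hB', rfl⟩
  omega

end ZFGrundy
end

section
/- For every finite simple graph G on n vertices, Z_L(G) = n − γ^L_gr(G). -/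
namespace ZFGrundy

variable {V : Type*}

/-! Read backwards, a chronological list of Z_L-forces is an L-sequence: the force `a → b`
needs `a ∈ N[b]` and every white neighbour of `a` other than `b` to be blue, i.e. `a` is
adjacent to no vertex forced later, so `a` witnesses the L-condition of `b` in the reversed
order. Conversely every L-sequence, reversed, is a forcing chronology for the complement of
its vertex set. Hence Z_L-forcing sets are exactly the complements of L-sequences. -/

open Function

section

variable {V : Type*} (G : SimpleGraph V)

theorem zlForce_iff {S : Set V} {x y : V} :
    ZLForce G S x y ↔ y ∉ S ∧ ClosedNbr G y x ∧ ∀ u, G.Adj x u → u ≠ y → u ∈ S := by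
  unfold ZLForce ZminusForce ZelldForce ClosedNbr
  by_cases hxy : x = y
  · subst hxy
    simp only [ne_eq, not_true_eq_false, false_and, true_or, true_and, false_or]
    exact and_congr_right fun _ => forall_congr' fun u => by
      constructor
      · exact fun h hu => h (Or.inr hu)
      · rintro h (rfl | hu) hne
        exacts [absurd rfl hne, h hu hne]
  · simp only [hxy, ne_eq, not_false_eq_true, true_and, false_and, or_false,
      G.adj_comm y x, Ne.symm hxy, false_or]

theorem zlForce_chronology_iff {k : ℕ} {b : Fin k → V} (hb : Injective b) {x : V} {i : Fin k} :
    ZLForce G {v | ∀ j, i ≤ j → v ≠ b j} x (b i) ↔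
      ClosedNbr G (b i) x ∧ ∀ j, i < j → ¬ G.Adj (b j) x := by
  rw [zlForce_iff]
  simp only [Set.mem_ofPred_eq, not_forall, not_not]
  refine ⟨fun ⟨_, hx, hS⟩ => ⟨hx, fun j hij hadj => ?_⟩,
    fun ⟨hx, hlater⟩ => ⟨⟨i, le_rfl, rfl⟩, hx, ?_⟩⟩
  · exact hS (b j) hadj.symm (hb.ne hij.ne') j hij.le rfl
  · rintro u hu hne j hij rfl
    rcases hij.lt_or_eq with hij | rfl
    exacts [hlater j hij hu.symm, hne rfl]

theorem isZFS_zlForce_iff {B : Finset V} :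
    IsZFS G ZLForce B ↔ ∃ (k : ℕ) (w : Fin k → V), IsLSeq G w ∧ ∀ v, v ∉ B ↔ ∃ i, w i = v := by
  have hrev {k : ℕ} (w : Fin k → V) (v : V) : (∃ i : Fin k, w i.rev = v) ↔ ∃ i, w i = v :=
    (Fin.rev_surjective.exists (p := fun i => w i = v)).symm
  constructor
  · rintro ⟨k, b, a, hb, hB, hforce⟩
    simp only [zlForce_chronology_iff G hb] at hforce
    refine ⟨k, b ∘ Fin.rev, ⟨hb.comp Fin.rev_injective, fun i => ⟨a i.rev, ?_⟩⟩,
      fun v => (hB v).trans (hrev b v).symm⟩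
    exact ⟨(hforce i.rev).1, fun j hj => (hforce i.rev).2 j.rev (Fin.rev_lt_rev.mpr hj)⟩
  · rintro ⟨k, w, ⟨hw, hL⟩, hB⟩
    choose u hu hlater using hL
    refine ⟨k, w ∘ Fin.rev, u ∘ Fin.rev, hw.comp Fin.rev_injective,
      fun v => (hB v).trans (hrev w v).symm, fun i => ?_⟩
    rw [zlForce_chronology_iff G (hw.comp Fin.rev_injective)]
    refine ⟨hu i.rev, fun j hij => ?_⟩
    simpa using hlater i.rev j.rev (Fin.rev_lt_rev.mpr hij)

theorem zfNum_le {force : SimpleGraph V → Set V → V → V → Prop} {B : Finset V}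
    (hB : IsZFS G force B) : zfNum G force ≤ B.card :=
  Nat.sInf_le ⟨B, hB, rfl⟩

theorem exists_isZFS_card_eq_zfNum {force : SimpleGraph V → Set V → V → V → Prop}
    {B : Finset V} (hB : IsZFS G force B) : ∃ B, IsZFS G force B ∧ B.card = zfNum G force :=
  Nat.sInf_mem (s := {m | ∃ B, IsZFS G force B ∧ B.card = m}) ⟨B.card, B, hB, rfl⟩

variable [Fintype V]

theorem card_add_eq_of_compl_eq_range {B : Finset V} {k : ℕ}
    {w : Fin k → V} (hw : Injective w) (hB : ∀ v, v ∉ B ↔ ∃ i, w i = v) :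
    B.card + k = Fintype.card V := by
  classical
  have hcompl : Bᶜ = Finset.univ.image w := by
    ext v
    simpa using hB v
  rw [← Finset.card_add_card_compl B, hcompl, Finset.card_image_of_injective _ hw,
    Finset.card_univ, Fintype.card_fin]

theorem bddAbove_lSeq_lengths : BddAbove {k : ℕ | ∃ v : Fin k → V, IsLSeq G v} :=
  ⟨Fintype.card V, fun k ⟨v, hv, _⟩ => by simpa using Fintype.card_le_of_injective v hv⟩

theorem le_grundyL {k : ℕ} {v : Fin k → V} (hv : IsLSeq G v) : k ≤ grundyL G :=
  le_csSup (bddAbove_lSeq_lengths G) ⟨v, hv⟩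

theorem exists_isLSeq_grundyL : ∃ v : Fin (grundyL G) → V, IsLSeq G v :=
  Nat.sSup_mem (s := {k | ∃ v : Fin k → V, IsLSeq G v})
    ⟨0, Fin.elim0, injective_of_subsingleton _, fun i => i.elim0⟩ (bddAbove_lSeq_lengths G)

end

/-- `Z_L(G) = n - γ^L_gr(G)` for every finite simple graph `G`
on `n` vertices. -/
theorem statement_6 {V : Type*} [Fintype V] (G : SimpleGraph V) :
    zfNum G ZLForce = Fintype.card V - grundyL G := by
  classical
  obtain ⟨w, hw⟩ := exists_isLSeq_grundyL G
  have hrange : ∀ v, v ∉ (Finset.univ.image w)ᶜ ↔ ∃ i, w i = v := by simp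
  have hB : IsZFS G ZLForce (Finset.univ.image w)ᶜ :=
    (isZFS_zlForce_iff G).mpr ⟨_, w, hw, hrange⟩
  obtain ⟨B, hBmin, hBcard⟩ := exists_isZFS_card_eq_zfNum G hB
  obtain ⟨k, w', hw', hB'⟩ := (isZFS_zlForce_iff G).mp hBmin
  have hZ := zfNum_le G hB
  have hk := le_grundyL G hw'
  have hcard := card_add_eq_of_compl_eq_range hw.1 hrange
  have hcard' := card_add_eq_of_compl_eq_range hw'.1 hB'
  omega

end ZFGrundy
end

section
/- For every finite simple graph G, γ^Z_gr(G) ≤ mr(G); that is, every Z-sequence of G has length at most the rank of every matrix in S(G). -/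
namespace ZFGrundy

variable {V : Type*}

theorem _root_.Matrix.card_le_rank_of_isLowerTriangular_submatrix {R m n ι : Type*} [CommRing R]
    [IsDomain R] [Fintype n] [Fintype ι] [LinearOrder ι] (A : Matrix m n R) (r : ι → m)
    (c : ι → n) (htri : (A.submatrix r c).IsLowerTriangular) (hdiag : ∀ i, A (r i) (c i) ≠ 0) :
    Fintype.card ι ≤ A.rank := by
  classical
  have hdet : (A.submatrix r c).det ≠ 0 := by
    rw [Matrix.det_of_isLowerTriangular _ htri]
    exact Finset.prod_ne_zero_iff.mpr fun i _ => hdiag i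
  calc Fintype.card ι = (A.submatrix r c).rank := (Matrix.rank_of_det_ne_zero hdet).symm
    _ ≤ A.rank := Matrix.rank_submatrix_le A r c

theorem SFam.apply_eq_zero_of_not_closedNbr {G : SimpleGraph V} {A : Matrix V V ℝ}
    (hA : A ∈ SFam G) {x y : V} (hxy : ¬ ClosedNbr G x y) : A x y = 0 := by
  have hne : x ≠ y := fun h => hxy (Or.inl h.symm)
  by_contra h
  exact hxy (Or.inr ((hA.2 x y hne).mp h))

theorem SFam.apply_ne_zero_of_adj {G : SimpleGraph V} {A : Matrix V V ℝ} (hA : A ∈ SFam G)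
    {x y : V} (hxy : G.Adj x y) : A x y ≠ 0 :=
  (hA.2 x y hxy.ne).mpr hxy

/-- `u i` is the vertex of `N(v i)` outside the closed neighbourhoods of the earlier `v j`. -/
theorem IsZSeq.exists_isLowerTriangular_submatrix {G : SimpleGraph V} {k : ℕ} {v : Fin k → V}
    (hv : IsZSeq G v) {A : Matrix V V ℝ} (hA : A ∈ SFam G) :
    ∃ u : Fin k → V, (A.submatrix v u).IsLowerTriangular ∧ ∀ i, A (v i) (u i) ≠ 0 := by
  choose u hadj hfresh using hv.2
  exact ⟨u, fun i j hij => SFam.apply_eq_zero_of_not_closedNbr hA (hfresh j i hij),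
    fun i => SFam.apply_ne_zero_of_adj hA (hadj i)⟩

/-- `γ^Z_gr(G) ≤ mr(G)`: every Z-sequence of `G` has length at most
the rank of every matrix in `S(G)`. -/
theorem statement_11 {V : Type*} [Fintype V] (G : SimpleGraph V)
    (k : ℕ) (v : Fin k → V) (hv : IsZSeq G v)
    (A : Matrix V V ℝ) (hA : A ∈ SFam G) :
    k ≤ A.rank := by
  obtain ⟨u, htri, hdiag⟩ := hv.exists_isLowerTriangular_submatrix hA
  simpa using A.card_le_rank_of_isLowerTriangular_submatrix v u htri hdiag

end ZFGrundy
end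

section
/- For every finite simple graph G, γ^t_gr(G) ≤ mr_0(G); that is, every total dominating sequence of G has length at most the rank of every matrix in S_0(G). -/
/-!
Pick for each `v i` a private neighbour `u i`, adjacent to `v i` but to no earlier `v j`.
Since the pattern of `A ∈ S_0(G)` is exactly the adjacency relation (diagonal included),
the `k × k` submatrix of `A` with rows `u` and columns `v` is upper triangular with nonzero
diagonal, hence invertible, and a submatrix has rank at most that of `A`.
-/

namespace ZFGrundy

variable {V : Type*}

open Matrix

theorem card_le_rank_of_isUpperTriangular_submatrix {m n ι R : Type*} [Fintype n] [Fintype ι]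
    [LinearOrder ι] [CommRing R] [IsDomain R] (A : Matrix m n R) (r : ι → m) (c : ι → n)
    (hupper : (A.submatrix r c).IsUpperTriangular) (hdiag : ∀ i, A (r i) (c i) ≠ 0) :
    Fintype.card ι ≤ A.rank := by
  classical
  have hdet : (A.submatrix r c).det ≠ 0 := by
    rw [det_of_isUpperTriangular hupper]
    exact Finset.prod_ne_zero_iff.mpr fun i _ => hdiag i
  rw [← rank_of_det_ne_zero hdet]
  exact rank_submatrix_le A r c

theorem apply_ne_zero_iff_adj_of_mem_S0Fam {G : SimpleGraph V} {A : Matrix V V ℝ}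
    (hA : A ∈ S0Fam G) (x y : V) : A x y ≠ 0 ↔ G.Adj x y := by
  obtain ⟨⟨-, hoff⟩, hdiag⟩ := hA
  rcases eq_or_ne x y with rfl | hxy
  · simp [hdiag]
  · exact hoff x y hxy

/-- `γ^t_gr(G) ≤ mr_0(G)`: every total dominating sequence of `G` has
length at most the rank of every matrix in `S_0(G)`. -/
theorem statement_13 {V : Type*} [Fintype V] (G : SimpleGraph V)
    (k : ℕ) (v : Fin k → V) (hv : IsTotDomSeq G v)
    (A : Matrix V V ℝ) (hA : A ∈ S0Fam G) :
    k ≤ A.rank := by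
  obtain ⟨-, hdom⟩ := hv
  choose u hu_adj hu_new using hdom
  have hupper : (A.submatrix u v).IsUpperTriangular := fun i j hji => by
    by_contra hne
    exact hu_new i j hji ((apply_ne_zero_iff_adj_of_mem_S0Fam hA _ _).mp hne).symm
  simpa using card_le_rank_of_isUpperTriangular_submatrix A u v hupper
    fun i => (apply_ne_zero_iff_adj_of_mem_S0Fam hA _ _).mpr (hu_adj i).symm

end ZFGrundy
end

section
/- For every finite simple graph G, every matrix A ∈ S_0(G) satisfies rank(A) ≤ 2β(G), where β(G) is the vertex cover number of G; consequently γ^t_gr(G) ≤ mr_0(G) ≤ 2β(G). -/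
namespace ZFGrundy

variable {V : Type*}

/-!
Fix a minimum vertex cover `C`. A matrix `A ∈ S₀(G)` vanishes on `(V ∖ C) × (V ∖ C)` (zero
diagonal, and no edges there), so it is the sum of its rows indexed by `C` and a matrix whose
nonzero columns are indexed by `C`; each summand has rank at most `|C|`.
For a total dominating sequence `v`, the witnesses `u i ∈ N(v i) ∖ ⋃_{j<i} N(v j)` are distinct,
since `u i ∈ N(v i)` is avoided by every later witness, and every edge `v i u i` meets `C`. Two
injections, one of which lands in `C` at each index, allow at most `2|C|` indices.
-/

open Finset

theorem _root_.Matrix.rank_add_le {K m n : Type*} [Field K] [Fintype n] (A B : Matrix m n K) :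
    (A + B).rank ≤ A.rank + B.rank := by
  have hrange : LinearMap.range (A + B).mulVecLin ≤
      LinearMap.range A.mulVecLin ⊔ LinearMap.range B.mulVecLin := by
    rintro _ ⟨x, rfl⟩
    rw [Matrix.mulVecLin_add]
    exact Submodule.add_mem_sup (LinearMap.mem_range_self _ x) (LinearMap.mem_range_self _ x)
  exact (Submodule.finrank_mono hrange).trans (Submodule.finrank_add_le_finrank_add_finrank _ _)

theorem _root_.Matrix.rank_le_card_add_card_of_eq_zero {K m n : Type*} [Field K] [Fintype m]
    [Fintype n] [DecidableEq m] (A : Matrix m n K) (s : Finset m) (t : Finset n)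
    (hA : ∀ i ∉ s, ∀ j ∉ t, A i j = 0) : A.rank ≤ #s + #t := by
  set R : Matrix m n K := Matrix.of fun i j => if i ∈ s then A i j else 0
  set R' : Matrix m n K := Matrix.of fun i j => if i ∈ s then 0 else A i j
  have hsplit : A = R + R' := by
    ext i j
    by_cases hi : i ∈ s <;> simp [R, R', hi]
  have hR : R.rank ≤ #s := by
    refine R.rank_le_card_of_support_subset s fun i hi => ?_
    by_contra his
    exact hi (funext fun j => if_neg his)
  have hR' : R'.rank ≤ #t := by
    rw [← Matrix.rank_transpose]
    refine Matrix.rank_le_card_of_support_subset _ t fun j hj => ?_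
    by_contra hjt
    refine hj (funext fun i => ?_)
    by_cases hi : i ∈ s <;> simp [R', hi, hA i _ j hjt]
  calc A.rank = (R + R').rank := by rw [← hsplit]
    _ ≤ R.rank + R'.rank := Matrix.rank_add_le R R'
    _ ≤ #s + #t := add_le_add hR hR'

theorem card_le_two_mul_card_of_injective {α β : Type*} [Fintype α] [DecidableEq β]
    {f g : α → β} (hf : Function.Injective f) (hg : Function.Injective g) (C : Finset β)
    (hC : ∀ a, f a ∈ C ∨ g a ∈ C) : Fintype.card α ≤ 2 * #C := by
  classical
  have hcard (h : α → β) (hh : Function.Injective h) : #{a | h a ∈ C} ≤ #C :=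
    card_le_card_of_injOn h (fun a ha => (mem_filter.1 ha).2) hh.injOn
  calc Fintype.card α = #(univ.filter (f · ∈ C) ∪ univ.filter (g · ∈ C)) := by
        rw [← filter_or, filter_true_of_mem fun a _ => hC a, card_univ]
    _ ≤ #{a | f a ∈ C} + #{a | g a ∈ C} := card_union_le _ _
    _ ≤ 2 * #C := by rw [two_mul]; exact add_le_add (hcard f hf) (hcard g hg)

variable (G : SimpleGraph V)

theorem exists_isVertexCover_card_eq_vcNum [Fintype V] :
    ∃ C : Finset V, G.IsVertexCover C ∧ #C = vcNum G :=
  Nat.sInf_mem (s := {m | ∃ C : Finset V, (∀ u w, G.Adj u w → u ∈ C ∨ w ∈ C) ∧ #C = m})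
    ⟨#(univ : Finset V), univ, fun u _ _ => .inl (mem_univ u), rfl⟩

theorem S0Fam.apply_eq_zero_of_isVertexCover {A : Matrix V V ℝ} (hA : A ∈ S0Fam G)
    {C : Set V} (hC : G.IsVertexCover C) {i j : V} (hi : i ∉ C) (hj : j ∉ C) : A i j = 0 := by
  obtain rfl | hij := eq_or_ne i j
  · exact hA.2 i
  · by_contra hne
    exact (hC ((hA.1.2 i j hij).1 hne)).elim hi hj

theorem S0Fam.rank_le_two_mul_card_of_isVertexCover [Fintype V] {A : Matrix V V ℝ}
    (hA : A ∈ S0Fam G) {C : Finset V} (hC : G.IsVertexCover C) : A.rank ≤ 2 * #C := by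
  classical
  rw [two_mul]
  exact A.rank_le_card_add_card_of_eq_zero C C fun i hi j hj =>
    S0Fam.apply_eq_zero_of_isVertexCover G hA hC hi hj

theorem IsTotDomSeq.exists_injective_adj {k : ℕ} {v : Fin k → V} (hv : IsTotDomSeq G v) :
    ∃ u : Fin k → V, Function.Injective u ∧ ∀ i, G.Adj (v i) (u i) := by
  choose u hadj hnew using hv.2
  refine ⟨u, fun i j hij => ?_, hadj⟩
  rcases lt_trichotomy i j with hlt | heq | hgt
  · exact absurd (hij ▸ hadj i) (hnew j i hlt)
  · exact heq
  · exact absurd (hij ▸ hadj j) (hnew i j hgt)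

theorem IsTotDomSeq.le_two_mul_card_of_isVertexCover {k : ℕ} {v : Fin k → V}
    (hv : IsTotDomSeq G v) {C : Finset V} (hC : G.IsVertexCover C) : k ≤ 2 * #C := by
  classical
  obtain ⟨u, hu, hadj⟩ := hv.exists_injective_adj G
  simpa using card_le_two_mul_card_of_injective hv.1 hu C fun i => hC (hadj i)

/-- every matrix `A ∈ S_0(G)` satisfies `rank A ≤ 2 β(G)`;
consequently `γ^t_gr(G) ≤ mr_0(G) ≤ 2 β(G)`. -/
theorem statement_14 {V : Type*} [Fintype V] (G : SimpleGraph V) :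
    (∀ A ∈ S0Fam G, A.rank ≤ 2 * vcNum G) ∧
    (∀ (k : ℕ) (v : Fin k → V), IsTotDomSeq G v → k ≤ 2 * vcNum G) := by
  obtain ⟨C, hC, hcard⟩ := exists_isVertexCover_card_eq_vcNum G
  rw [← hcard]
  exact ⟨fun A hA => S0Fam.rank_le_two_mul_card_of_isVertexCover G hA hC,
    fun _ _ hv => hv.le_two_mul_card_of_isVertexCover G hC⟩

end ZFGrundy
end

section
/- Let G be a finite simple bipartite graph with parts X and Y, i.e., V(G) is the disjoint union of X and Y and every edge of G joins a vertex of X to a vertex of Y. Then γ^t_gr(G) = 2 γ^t_gr(G, X) = 2 γ^t_gr(G, Y), where γ^t_gr(G, X) denotes the largest length of a total dominating sequence of G all of whose vertices lie in X. -/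
namespace ZFGrundy

variable {V : Type*}

/-
A footprint of `v_i` is a vertex of `N(v_i) ∖ ⋃_{j<i} N(v_j)`. Reading the footprints of a total
dominating sequence in reverse order gives again a total dominating sequence, and in a bipartite
graph the footprints of vertices of `X` lie in `Y`; hence `γ^t_gr(G, X) = γ^t_gr(G, Y)`. A total
dominating sequence splits into its subsequences in `X` and in `Y`, and conversely a sequence in `X`
followed by one in `Y` is total dominating, since vertices of `X` and of `Y` have disjoint
neighbourhoods. So `γ^t_gr(G) = γ^t_gr(G, X) + γ^t_gr(G, Y)`.
-/

open Finset

variable {G : SimpleGraph V}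

namespace IsTotDomSeq

variable {k m : ℕ} {v : Fin k → V}

theorem length_le_card [Fintype V] (hv : IsTotDomSeq G v) : k ≤ Fintype.card V := by
  simpa using Fintype.card_le_of_injective v hv.1

theorem comp_strictMono (hv : IsTotDomSeq G v) {f : Fin m → Fin k} (hf : StrictMono f) :
    IsTotDomSeq G (v ∘ f) := by
  refine ⟨hv.1.comp hf.injective, fun i => ?_⟩
  obtain ⟨u, hu, hfree⟩ := hv.2 (f i)
  exact ⟨u, hu, fun j hj => hfree (f j) (hf hj)⟩

theorem exists_rev_footprints (hv : IsTotDomSeq G v) :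
    ∃ u : Fin k → V, IsTotDomSeq G u ∧ ∀ i, G.Adj (v i.rev) (u i) := by
  choose u hu hfree using hv.2
  have hinj : Function.Injective u := by
    intro a b hab
    by_contra hne
    rcases lt_or_gt_of_ne hne with h | h
    · exact hfree b a h (hab ▸ hu a)
    · exact hfree a b h (hab ▸ hu b)
  refine ⟨u ∘ Fin.rev, ⟨hinj.comp Fin.rev_injective, fun i => ?_⟩, fun i => hu i.rev⟩
  refine ⟨v i.rev, (hu i.rev).symm, fun j hj hadj => ?_⟩
  exact hfree j.rev i.rev (Fin.rev_lt_rev.mpr hj) hadj.symm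

theorem append {w : Fin m → V} (hv : IsTotDomSeq G v) (hw : IsTotDomSeq G w)
    (hne : ∀ i j, v i ≠ w j) (hnbr : ∀ i j x, G.Adj (w j) x → ¬ G.Adj (v i) x) :
    IsTotDomSeq G (Fin.append v w) := by
  refine ⟨Fin.append_injective_iff.mpr ⟨hv.1, hw.1, hne⟩, fun i => ?_⟩
  refine Fin.addCases (fun i => ?_) (fun i => ?_) i
  · obtain ⟨u, hu, hfree⟩ := hv.2 i
    refine ⟨u, by simpa using hu, fun j hj => ?_⟩
    refine Fin.addCases (fun j hj => ?_) (fun j hj => ?_) j hj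
    · simpa using hfree j hj
    · exact absurd (Fin.lt_def.mp hj) (by simp only [Fin.val_castAdd, Fin.val_natAdd]; omega)
  · obtain ⟨u, hu, hfree⟩ := hw.2 i
    refine ⟨u, by simpa using hu, fun j hj => ?_⟩
    refine Fin.addCases (fun j _ => ?_) (fun j hj => ?_) j hj
    · simpa using hnbr j i u hu
    · simpa using hfree j ((Fin.natAdd_lt_natAdd_iff k).mp hj)

end IsTotDomSeq

section Bounds

variable [Fintype V] {k : ℕ} {v : Fin k → V}

theorem le_grundyTot (hv : IsTotDomSeq G v) : k ≤ grundyTot G :=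
  le_csSup ⟨Fintype.card V, fun _ ⟨_, hw⟩ => hw.length_le_card⟩ ⟨v, hv⟩

omit [Fintype V] in
theorem grundyTot_le {n : ℕ} (h : ∀ k (v : Fin k → V), IsTotDomSeq G v → k ≤ n) :
    grundyTot G ≤ n :=
  csSup_le ⟨0, Fin.elim0, fun i => i.elim0, fun i => i.elim0⟩ fun k ⟨v, hv⟩ => h k v hv

theorem le_grundyTotOn {X : Set V} (hv : IsTotDomSeq G v) (hX : ∀ i, v i ∈ X) :
    k ≤ grundyTotOn G X :=
  le_csSup ⟨Fintype.card V, fun _ ⟨_, hw, _⟩ => hw.length_le_card⟩ ⟨v, hv, hX⟩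

theorem exists_isTotDomSeq_grundyTotOn (G : SimpleGraph V) (X : Set V) :
    ∃ v : Fin (grundyTotOn G X) → V, IsTotDomSeq G v ∧ ∀ i, v i ∈ X :=
  Nat.sSup_mem (s := {k | ∃ v : Fin k → V, IsTotDomSeq G v ∧ ∀ i, v i ∈ X})
    ⟨0, Fin.elim0, ⟨fun i => i.elim0, fun i => i.elim0⟩, fun i => i.elim0⟩
    ⟨Fintype.card V, fun _ ⟨_, hw, _⟩ => hw.length_le_card⟩

theorem grundyTotOn_mono {X Y : Set V} (h : X ⊆ Y) : grundyTotOn G X ≤ grundyTotOn G Y :=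
  let ⟨_, hv, hX⟩ := exists_isTotDomSeq_grundyTotOn G X
  le_grundyTotOn hv fun i => h (hX i)

theorem IsTotDomSeq.card_filter_le_grundyTotOn (hv : IsTotDomSeq G v) (X : Set V)
    [DecidablePred (· ∈ X)] : #{i | v i ∈ X} ≤ grundyTotOn G X := by
  set s : Finset (Fin k) := {i | v i ∈ X}
  refine le_grundyTotOn (hv.comp_strictMono (s.orderEmbOfFin rfl).strictMono) fun i => ?_
  exact (mem_filter.mp (s.orderEmbOfFin_mem rfl i)).2

end Bounds

theorem grundyTotOn_le_of_adj [Fintype V] {X Y : Set V}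
    (hXY : ∀ u w, G.Adj u w → u ∈ X → w ∈ Y) : grundyTotOn G X ≤ grundyTotOn G Y := by
  obtain ⟨v, hv, hX⟩ := exists_isTotDomSeq_grundyTotOn G X
  obtain ⟨u, hu, hadj⟩ := hv.exists_rev_footprints
  exact le_grundyTotOn hu fun i => hXY _ _ (hadj i) (hX i.rev)

theorem grundyTotOn_add_le_grundyTot [Fintype V] {X Y : Set V} (hdisj : Disjoint X Y)
    (hXY : ∀ u w, G.Adj u w → u ∈ X → w ∈ Y) (hYX : ∀ u w, G.Adj u w → u ∈ Y → w ∈ X) :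
    grundyTotOn G X + grundyTotOn G Y ≤ grundyTot G := by
  obtain ⟨v, hv, hX⟩ := exists_isTotDomSeq_grundyTotOn G X
  obtain ⟨w, hw, hY⟩ := exists_isTotDomSeq_grundyTotOn G Y
  refine le_grundyTot (hv.append hw (fun i j h => hdisj.ne_of_mem (hX i) (hY j) h) ?_)
  exact fun i j x hwx hvx => hdisj.ne_of_mem (hYX _ _ hwx (hY j)) (hXY _ _ hvx (hX i)) rfl

theorem grundyTot_le_grundyTotOn_add_compl [Fintype V] (G : SimpleGraph V) (X : Set V) :
    grundyTot G ≤ grundyTotOn G X + grundyTotOn G Xᶜ := by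
  classical
  refine grundyTot_le fun k v hv => ?_
  calc k = #{i | v i ∈ X} + #{i | v i ∈ Xᶜ} := by
        simpa using (card_filter_add_card_filter_not (s := univ) (fun i => v i ∈ X)).symm
    _ ≤ grundyTotOn G X + grundyTotOn G Xᶜ :=
        add_le_add (hv.card_filter_le_grundyTotOn X) (hv.card_filter_le_grundyTotOn Xᶜ)

/-- if `G` is bipartite with parts `X` and `Y`, then
`γ^t_gr(G) = 2 γ^t_gr(G, X) = 2 γ^t_gr(G, Y)`. -/
theorem statement_16 {V : Type*} [Fintype V] (G : SimpleGraph V) (X Y : Set V)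
    (hdisj : Disjoint X Y) (hunion : X ∪ Y = Set.univ)
    (hbip : ∀ u w : V, G.Adj u w → (u ∈ X ∧ w ∈ Y) ∨ (u ∈ Y ∧ w ∈ X)) :
    grundyTot G = 2 * grundyTotOn G X ∧ grundyTot G = 2 * grundyTotOn G Y := by
  have hXY : ∀ u w, G.Adj u w → u ∈ X → w ∈ Y := fun u w h hu =>
    (hbip u w h).elim And.right fun h' => absurd hu (Set.disjoint_right.mp hdisj h'.1)
  have hYX : ∀ u w, G.Adj u w → u ∈ Y → w ∈ X := fun u w h hu =>
    (hbip u w h).elim (fun h' => absurd hu (Set.disjoint_left.mp hdisj h'.1)) And.right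
  have hcompl : Xᶜ ⊆ Y := fun v hv =>
    (hunion ▸ Set.mem_univ v : v ∈ X ∪ Y).resolve_left hv
  have hXeqY : grundyTotOn G X = grundyTotOn G Y :=
    (grundyTotOn_le_of_adj hXY).antisymm (grundyTotOn_le_of_adj hYX)
  have hlower := grundyTotOn_add_le_grundyTot hdisj hXY hYX
  have hupper := (grundyTot_le_grundyTotOn_add_compl G X).trans
    (Nat.add_le_add_left (grundyTotOn_mono hcompl) _)
  omega

end ZFGrundy
end
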